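/- If F_μ belongs to the class Ẽ, then for every n ≥ 2 one has Ξ(n)·aₙ ≤ (A−B)(1−γ); in particular, whenever Ξ(n) > 0, aₙ ≤ (A−B)(1−γ)/Ξ(n). -/

import Mathlib

open Complex

/-- `Ξ(n) = (1−B)((μn)^k ϑₙ − (μn)^m λₙ) + (A−B)(1−γ)(μn)^m λₙ`. -/
noncomputable def Xi (μ A B γ : ℝ) (k m : ℕ) (ϑ lam : ℕ → ℝ) (n : ℕ) : ℝ :=
  (1 - B) * ((μ * n) ^ k * ϑ n - (μ * n) ^ m * lam n) +
    (A - B) * (1 - γ) * ((μ * n) ^ m * lam n)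

/-- `Gneg μ j c a z = z − Σ_{n≥2} (μn)^j cₙ aₙ z^{μn}` (principal powers).
With `j = k, c = ϑ` this is `D_μ^k(F_μ∗Φ_μ)(z)`; with `j = m, c = λ` it is
`D_μ^m(F_μ∗Ψ_μ)(z)`. -/
noncomputable def Gneg (μ : ℝ) (j : ℕ) (c a : ℕ → ℝ) (z : ℂ) : ℂ :=
  z - ∑' n : ℕ, (((μ * (n + 2 : ℕ)) ^ j * c (n + 2) * a (n + 2) : ℝ) : ℂ) *
    z ^ ((μ * (n + 2 : ℕ) : ℝ) : ℂ)

/-- `Fneg μ a z = z − Σ_{n≥2} aₙ z^{μn}` (principal powers). -/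
noncomputable def Fneg (μ : ℝ) (a : ℕ → ℝ) (z : ℂ) : ℂ :=
  z - ∑' n : ℕ, (a (n + 2) : ℂ) * z ^ ((μ * (n + 2 : ℕ) : ℝ) : ℂ)

/-- Membership of `F_μ(z) = z − Σ_{n≥2} aₙ z^{μn}` in the class
`Ẽ_{k,m}(Φ_μ,Ψ_μ,A,B,μ,γ)`: the series for `F_μ`, `G = D_μ^k(F_μ∗Φ_μ)` and
`H = D_μ^m(F_μ∗Ψ_μ)` converge absolutely at every `z ∈ 𝕌`, and for every
`z ∈ 𝕌 ∖ {0}` the subordination condition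
`|G(z) − H(z)| < |(A−B)(1−γ)H(z) − B(G(z) − H(z))|` holds. -/
def memE (μ A B γ : ℝ) (k m : ℕ) (ϑ lam a : ℕ → ℝ) : Prop :=
  (∀ z : ℂ, norm z < 1 →
    ((Summable fun n : ℕ =>
      norm ((a (n + 2) : ℂ) * z ^ ((μ * (n + 2 : ℕ) : ℝ) : ℂ))) ∧
    (Summable fun n : ℕ =>
      norm ((((μ * (n + 2 : ℕ)) ^ k * ϑ (n + 2) * a (n + 2) : ℝ) : ℂ) *
        z ^ ((μ * (n + 2 : ℕ) : ℝ) : ℂ))) ∧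
    (Summable fun n : ℕ =>
      norm ((((μ * (n + 2 : ℕ)) ^ m * lam (n + 2) * a (n + 2) : ℝ) : ℂ) *
        z ^ ((μ * (n + 2 : ℕ) : ℝ) : ℂ))))) ∧
  (∀ z : ℂ, norm z < 1 → z ≠ 0 →
    norm (Gneg μ k ϑ a z - Gneg μ m lam a z) <
    norm ((((A - B) * (1 - γ) : ℝ) : ℂ) * Gneg μ m lam a z -
      ((B : ℝ) : ℂ) * (Gneg μ k ϑ a z - Gneg μ m lam a z)))

open Set

/-!
On the real segment `0 < r < 1` all the series are real. Writing
`S(r) = Σ Ξ(n) aₙ r^{μn}`, the subordination condition at `z = r` says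
`|D(r)| < |D(r) + (A−B)(1−γ)r − S(r)|` with `D = Σ ((μn)^k ϑₙ − (μn)^m λₙ) aₙ r^{μn}`,
so `S(r) ≠ (A−B)(1−γ)r`. Since the coefficients `Ξ(n)aₙ` are nonnegative and the exponents
`μn` are at least `2`, `S(tr) ≤ t² S(r)`, so `S` lies below the line `(A−B)(1−γ)r` near `0`;
by continuity it stays below on all of `(0,1)`. Dropping all but one term and letting `r → 1⁻`
gives `Ξ(n)aₙ ≤ (A−B)(1−γ)`.
-/

noncomputable def rpowSeries (c e : ℕ → ℝ) (r : ℝ) : ℝ :=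
  ∑' i, c i * r ^ e i

section rpowSeries

variable {c e : ℕ → ℝ}

lemma rpowSeries_add_mul {u v : ℕ → ℝ} {r : ℝ} (α β : ℝ)
    (hu : Summable fun i => u i * r ^ e i) (hv : Summable fun i => v i * r ^ e i) :
    rpowSeries (fun i => α * u i + β * v i) e r =
      α * rpowSeries u e r + β * rpowSeries v e r := by
  simp only [rpowSeries, add_mul, mul_assoc]
  rw [(hu.mul_left α).tsum_add (hv.mul_left β), tsum_mul_left, tsum_mul_left]

lemma summable_mul_rpow_of_le (hc : ∀ i, 0 ≤ c i) (he : ∀ i, 0 ≤ e i) {r ρ : ℝ}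
    (hr : 0 ≤ r) (hrρ : r ≤ ρ) (hs : Summable fun i => c i * ρ ^ e i) :
    Summable fun i => c i * r ^ e i :=
  hs.of_nonneg_of_le (fun i => mul_nonneg (hc i) (Real.rpow_nonneg hr _))
    fun i => mul_le_mul_of_nonneg_left (Real.rpow_le_rpow hr hrρ (he i)) (hc i)

lemma rpowSeries_mul_le (hc : ∀ i, 0 ≤ c i) (he : ∀ i, 2 ≤ e i) {t r : ℝ}
    (ht0 : 0 < t) (ht1 : t ≤ 1) (hr : 0 ≤ r) (hs : Summable fun i => c i * r ^ e i) :
    rpowSeries c e (t * r) ≤ t ^ 2 * rpowSeries c e r := by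
  have he0 : ∀ i, 0 ≤ e i := fun i => zero_le_two.trans (he i)
  have hterm : ∀ i, c i * (t * r) ^ e i ≤ t ^ 2 * (c i * r ^ e i) := fun i => by
    have : t ^ e i ≤ t ^ 2 := by
      simpa using Real.rpow_le_rpow_of_exponent_ge ht0 ht1 (he i)
    rw [Real.mul_rpow ht0.le hr, mul_left_comm]
    exact mul_le_mul_of_nonneg_right this (mul_nonneg (hc i) (Real.rpow_nonneg hr _))
  calc rpowSeries c e (t * r) ≤ ∑' i, t ^ 2 * (c i * r ^ e i) :=
        (summable_mul_rpow_of_le hc he0 (by positivity) (mul_le_of_le_one_left hr ht1)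
          hs).tsum_le_tsum hterm (hs.mul_left _)
    _ = t ^ 2 * rpowSeries c e r := tsum_mul_left

lemma continuousOn_rpowSeries (hc : ∀ i, 0 ≤ c i) (he : ∀ i, 0 ≤ e i) {ρ : ℝ}
    (hs : Summable fun i => c i * ρ ^ e i) : ContinuousOn (rpowSeries c e) (Icc 0 ρ) := by
  refine continuousOn_tsum
    (fun i => ((Real.continuous_rpow_const (he i)).const_mul _).continuousOn) hs fun i x hx => ?_
  rw [Real.norm_of_nonneg (mul_nonneg (hc i) (Real.rpow_nonneg hx.1 _))]
  exact mul_le_mul_of_nonneg_left (Real.rpow_le_rpow hx.1 hx.2 (he i)) (hc i)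

lemma rpowSeries_lt_of_ne {P : ℝ} (hP : 0 < P) (hc : ∀ i, 0 ≤ c i) (he : ∀ i, 2 ≤ e i)
    (hs : ∀ r ∈ Ioo (0 : ℝ) 1, Summable fun i => c i * r ^ e i)
    (hne : ∀ r ∈ Ioo (0 : ℝ) 1, rpowSeries c e r ≠ P * r) :
    ∀ r ∈ Ioo (0 : ℝ) 1, rpowSeries c e r < P * r := by
  intro r hr
  by_contra! hge
  set f := rpowSeries c e
  have hgt : P * r < f r := lt_of_le_of_ne hge (hne r hr).symm
  have hf0 : 0 < f r := by nlinarith [hr.1]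
  -- at `t = P r / (2 f(r))` the scaling bound `f(tr) ≤ t² f(r)` puts `f(tr)` below the line
  set t := P * r / (2 * f r)
  have ht0 : 0 < t := by have := hr.1; positivity
  have ht1 : t < 1 := by rw [div_lt_one (by positivity)]; linarith
  have htr : 0 < t * r := mul_pos ht0 hr.1
  have hlow : f (t * r) < P * (t * r) := calc
    f (t * r) ≤ t ^ 2 * f r := rpowSeries_mul_le hc he ht0 ht1.le hr.1.le (hs r hr)
    _ = t * (P * r / 2) := by simp only [t]; field_simp
    _ < P * (t * r) := by nlinarith [hr.1]
  have hcont : ContinuousOn (fun x => f x - P * x) (Icc (t * r) r) :=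
    ((continuousOn_rpowSeries hc (fun i => zero_le_two.trans (he i)) (hs r hr)).mono
      (Icc_subset_Icc_left htr.le)).sub (continuousOn_const.mul continuousOn_id)
  obtain ⟨x, hx, hfx⟩ := intermediate_value_Icc (mul_lt_of_lt_one_left hr.1 ht1).le hcont
    (show (0 : ℝ) ∈ Icc (f (t * r) - P * (t * r)) (f r - P * r) from ⟨by linarith, by linarith⟩)
  exact hne x ⟨htr.trans_le hx.1, hx.2.trans_lt hr.2⟩ (sub_eq_zero.1 hfx)

lemma le_of_rpowSeries_le {P : ℝ} {j : ℕ} (hc : ∀ i, 0 ≤ c i) (he : 0 ≤ e j)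
    (hs : ∀ r ∈ Ioo (0 : ℝ) 1, Summable fun i => c i * r ^ e i)
    (hle : ∀ r ∈ Ioo (0 : ℝ) 1, rpowSeries c e r ≤ P * r) : c j ≤ P := by
  have hterm : ∀ r ∈ Ioo (0 : ℝ) 1, c j * r ^ e j ≤ P * r := fun r hr =>
    ((hs r hr).le_tsum j fun i _ => mul_nonneg (hc i) (Real.rpow_nonneg hr.1.le _)).trans
      (hle r hr)
  have hclosure : (1 : ℝ) ∈ closure (Ioo 0 1) := by simp [closure_Ioo zero_ne_one]
  simpa using le_on_closure hterm
    ((Real.continuous_rpow_const he).const_mul _).continuousOn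
    (continuous_const.mul continuous_id).continuousOn hclosure

end rpowSeries

lemma Xi_nonneg {μ A B γ : ℝ} {k m : ℕ} {ϑ lam : ℕ → ℝ} {n : ℕ} (hμn : 1 ≤ μ * n)
    (hkm : m ≤ k) (hB : B ≤ 1) (hP : 0 ≤ (A - B) * (1 - γ)) (hlam : 0 ≤ lam n)
    (hϑ : lam n ≤ ϑ n) : 0 ≤ Xi μ A B γ k m ϑ lam n := by
  have hpow : (μ * n) ^ m ≤ (μ * n) ^ k := pow_le_pow_right₀ hμn hkm
  have hm0 : 0 ≤ (μ * n) ^ m := pow_nonneg (zero_le_one.trans hμn) m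
  have hgap : (μ * n) ^ m * lam n ≤ (μ * n) ^ k * ϑ n :=
    mul_le_mul hpow hϑ hlam (hm0.trans hpow)
  unfold Xi
  have := mul_nonneg (sub_nonneg.2 hB) (sub_nonneg.2 hgap)
  have := mul_nonneg hP (mul_nonneg hm0 hlam)
  linarith

lemma Xi_mul_eq (μ A B γ : ℝ) (k m : ℕ) (ϑ lam : ℕ → ℝ) (n : ℕ) (x : ℝ) :
    Xi μ A B γ k m ϑ lam n * x = (1 - B) * ((μ * n) ^ k * ϑ n * x) +
      ((A - B) * (1 - γ) - (1 - B)) * ((μ * n) ^ m * lam n * x) := by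
  unfold Xi; ring

lemma Gneg_ofReal (μ : ℝ) (j : ℕ) (c a : ℕ → ℝ) {r : ℝ} (hr : 0 ≤ r) :
    Gneg μ j c a r = ((r - rpowSeries (fun i => (μ * (i + 2 : ℕ)) ^ j * c (i + 2) * a (i + 2))
      (fun i => μ * (i + 2 : ℕ)) r : ℝ) : ℂ) := by
  simp only [Gneg, rpowSeries, ofReal_sub, ofReal_tsum, ofReal_mul, ofReal_cpow hr]

lemma summable_mul_rpow_of_summable_norm {w e : ℕ → ℝ} {r : ℝ} (hr : 0 ≤ r)
    (h : Summable fun i => ‖(w i : ℂ) * (r : ℂ) ^ (e i : ℂ)‖) :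
    Summable fun i => w i * r ^ e i :=
  .of_abs <| h.congr fun i => by rw [← ofReal_cpow hr, ← ofReal_mul, norm_real, Real.norm_eq_abs]

namespace memE

variable {μ A B γ : ℝ} {k m : ℕ} {ϑ lam a : ℕ → ℝ}

lemma summable_coeff (h : memE μ A B γ k m ϑ lam a) {r : ℝ} (hr : r ∈ Ioo (0 : ℝ) 1) :
    (Summable fun i =>
      (μ * (i + 2 : ℕ)) ^ k * ϑ (i + 2) * a (i + 2) * r ^ (μ * (i + 2 : ℕ))) ∧
    (Summable fun i =>
      (μ * (i + 2 : ℕ)) ^ m * lam (i + 2) * a (i + 2) * r ^ (μ * (i + 2 : ℕ))) := by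
  have hr1 : ‖(r : ℂ)‖ < 1 := by rw [norm_real, Real.norm_of_nonneg hr.1.le]; exact hr.2
  obtain ⟨-, hk, hm⟩ := h.1 r hr1
  exact ⟨summable_mul_rpow_of_summable_norm hr.1.le hk,
    summable_mul_rpow_of_summable_norm hr.1.le hm⟩

lemma rpowSeries_Xi_eq (h : memE μ A B γ k m ϑ lam a) {r : ℝ} (hr : r ∈ Ioo (0 : ℝ) 1) :
    rpowSeries (fun i => Xi μ A B γ k m ϑ lam (i + 2) * a (i + 2)) (fun i => μ * (i + 2 : ℕ)) r =
      (1 - B) * rpowSeries (fun i => (μ * (i + 2 : ℕ)) ^ k * ϑ (i + 2) * a (i + 2))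
          (fun i => μ * (i + 2 : ℕ)) r +
        ((A - B) * (1 - γ) - (1 - B)) *
          rpowSeries (fun i => (μ * (i + 2 : ℕ)) ^ m * lam (i + 2) * a (i + 2))
            (fun i => μ * (i + 2 : ℕ)) r := by
  simp only [Xi_mul_eq]
  exact rpowSeries_add_mul _ _ (h.summable_coeff hr).1 (h.summable_coeff hr).2

lemma summable_Xi (h : memE μ A B γ k m ϑ lam a) {r : ℝ} (hr : r ∈ Ioo (0 : ℝ) 1) :
    Summable fun i => Xi μ A B γ k m ϑ lam (i + 2) * a (i + 2) * r ^ (μ * (i + 2 : ℕ)) := by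
  obtain ⟨hk, hm⟩ := h.summable_coeff hr
  exact ((hk.mul_left (1 - B)).add (hm.mul_left ((A - B) * (1 - γ) - (1 - B)))).congr fun i => by
    rw [Xi_mul_eq]; ring

lemma rpowSeries_Xi_ne (h : memE μ A B γ k m ϑ lam a) {r : ℝ} (hr : r ∈ Ioo (0 : ℝ) 1) :
    rpowSeries (fun i => Xi μ A B γ k m ϑ lam (i + 2) * a (i + 2)) (fun i => μ * (i + 2 : ℕ)) r ≠
      (A - B) * (1 - γ) * r := by
  intro heq
  have hr1 : ‖(r : ℂ)‖ < 1 := by rw [norm_real, Real.norm_of_nonneg hr.1.le]; exact hr.2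
  have hcond := h.2 r hr1 (ofReal_ne_zero.2 hr.1.ne')
  rw [h.rpowSeries_Xi_eq hr] at heq
  rw [Gneg_ofReal _ _ _ _ hr.1.le, Gneg_ofReal _ _ _ _ hr.1.le] at hcond
  set fk := rpowSeries (fun i => (μ * (i + 2 : ℕ)) ^ k * ϑ (i + 2) * a (i + 2))
    (fun i => μ * (i + 2 : ℕ)) r
  set fm := rpowSeries (fun i => (μ * (i + 2 : ℕ)) ^ m * lam (i + 2) * a (i + 2))
    (fun i => μ * (i + 2 : ℕ)) r
  simp only [← ofReal_sub, ← ofReal_mul, norm_real, Real.norm_eq_abs] at hcond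
  have hrhs : (A - B) * (1 - γ) * (r - fm) - B * ((r - fk) - (r - fm)) =
      -((r - fk) - (r - fm)) := by linarith
  rw [hrhs, abs_neg] at hcond
  exact lt_irrefl _ hcond

end memE

theorem stmt2_general (μ A B γ : ℝ) (k m : ℕ) (a ϑ lam : ℕ → ℝ)
    (hμ : 1 ≤ μ) (hkm : m ≤ k)
    (hBA : B < A) (hA : A ≤ 1)
    (hγ1 : γ < 1)
    (ha : ∀ n, 2 ≤ n → 0 ≤ a n)
    (hlam : ∀ n, 2 ≤ n → 0 ≤ lam n) (hϑ : ∀ n, 2 ≤ n → lam n ≤ ϑ n)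
    (hmem : memE μ A B γ k m ϑ lam a) :
    ∀ n, 2 ≤ n →
      Xi μ A B γ k m ϑ lam n * a n ≤ (A - B) * (1 - γ) ∧
      (0 < Xi μ A B γ k m ϑ lam n →
        a n ≤ (A - B) * (1 - γ) / Xi μ A B γ k m ϑ lam n) := by
  have hP : 0 < (A - B) * (1 - γ) := mul_pos (by linarith) (by linarith)
  have he : ∀ i : ℕ, 2 ≤ μ * (i + 2 : ℕ) := fun i => by
    have : (2 : ℝ) ≤ (i + 2 : ℕ) := by norm_cast; omega
    nlinarith
  have hc : ∀ i : ℕ, 0 ≤ Xi μ A B γ k m ϑ lam (i + 2) * a (i + 2) := fun i =>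
    mul_nonneg (Xi_nonneg (one_le_two.trans (he i)) hkm (by linarith) hP.le
      (hlam _ (by omega)) (hϑ _ (by omega))) (ha _ (by omega))
  have hbelow := rpowSeries_lt_of_ne hP hc he (fun r hr => hmem.summable_Xi hr)
    (fun r hr => hmem.rpowSeries_Xi_ne hr)
  intro n hn
  obtain ⟨j, rfl⟩ : ∃ j, n = j + 2 := ⟨n - 2, by omega⟩
  have hbound := le_of_rpowSeries_le hc (zero_le_two.trans (he j))
    (fun r hr => hmem.summable_Xi hr) (fun r hr => (hbelow r hr).le)
  exact ⟨hbound, fun hXi => by rw [le_div_iff₀ hXi, mul_comm]; exact hbound⟩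

/-- coefficient-bound corollary: if
`F_μ ∈ Ẽ_{k,m}(Φ_μ,Ψ_μ,A,B,μ,γ)` then `Ξ(n)aₙ ≤ (A−B)(1−γ)` for every `n ≥ 2`;
in particular `aₙ ≤ (A−B)(1−γ)/Ξ(n)` whenever `Ξ(n) > 0`. -/
theorem stmt2 (μ A B γ : ℝ) (k m : ℕ) (a ϑ lam : ℕ → ℝ)
    (hμ : 1 ≤ μ) (hkm : m ≤ k)
    (hB : -1 ≤ B) (hBA : B < A) (hA : A ≤ 1) (hB0 : B < 0)
    (hγ0 : 0 ≤ γ) (hγ1 : γ < 1)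
    (ha : ∀ n, 2 ≤ n → 0 ≤ a n)
    (hlam : ∀ n, 2 ≤ n → 0 ≤ lam n) (hϑ : ∀ n, 2 ≤ n → lam n ≤ ϑ n)
    (hmem : memE μ A B γ k m ϑ lam a) :
    ∀ n, 2 ≤ n →
      Xi μ A B γ k m ϑ lam n * a n ≤ (A - B) * (1 - γ) ∧
      (0 < Xi μ A B γ k m ϑ lam n →
        a n ≤ (A - B) * (1 - γ) / Xi μ A B γ k m ϑ lam n) :=
  stmt2_general μ A B γ k m a ϑ lam hμ hkm hBA hA hγ1 ha hlam hϑ hmem
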